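/- arXiv:1003.2290 — 2 statements merged into one kernel-verified Lean document; each statement's English description precedes it below -/
import Mathlib

section
/- If y : [a, b] → ℝ is continuously differentiable with y(a) = y(b) = 0, then ∫ₐᵇ y(t)² dt ≤ ((b−a)/π)² · ∫ₐᵇ y'(t)² dt. -/
/-!
With `c = π / (b - a)`, the Picone-type function `H t = c y(t)² cot (c (t - a))` satisfies
`y'² - c² y² - H' = (y' - c y cot (c (t - a)))² ≥ 0` on `(a, b)`. Both `y` and `sin (c (t - a))`
vanish linearly at `a` and `b`, so `|y|` is bounded by a multiple of that sine and `H` extends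
continuously by `0` to `[a, b]`. Hence `t ↦ ∫ₐᵗ (y'² - c² y²) - H t` is monotone on `[a, b]`, and
comparing its values at `a` and `b` gives `c² ∫ₐᵇ y² ≤ ∫ₐᵇ y'²`.
-/

open Real intervalIntegral Set Filter Topology

theorem Real.hasDerivAt_cot {x : ℝ} (hx : sin x ≠ 0) : HasDerivAt cot (-(1 + cot x ^ 2)) x := by
  have h : HasDerivAt (fun x => cos x / sin x) _ x := (hasDerivAt_cos x).div (hasDerivAt_sin x) hx
  rw [show cot = fun x => cos x / sin x from funext cot_eq_cos_div_sin]
  refine h.congr_deriv ?_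
  field_simp
  ring

theorem Real.two_div_pi_mul_min_le_sin {x : ℝ} (hx₀ : 0 ≤ x) (hxπ : x ≤ π) :
    2 / π * min x (π - x) ≤ sin x := by
  have hπ : 0 ≤ 2 / π := by positivity
  rcases le_total x (π / 2) with hx | hx
  · exact (mul_le_mul_of_nonneg_left (min_le_left _ _) hπ).trans (mul_le_sin hx₀ hx)
  · rw [← sin_pi_sub]
    exact (mul_le_mul_of_nonneg_left (min_le_right _ _) hπ).trans
      (mul_le_sin (by linarith) (by linarith))

theorem abs_sq_mul_cot_le {u x K : ℝ} (hK : 0 ≤ K) (h : |u| ≤ K * sin x) :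
    |u ^ 2 * cot x| ≤ K * |u| := by
  rcases eq_or_ne u 0 with rfl | hu
  · simp
  have hsin : 0 < sin x := pos_of_mul_pos_right ((abs_pos.2 hu).trans_le h) hK
  have hcot : |u| * |cot x| ≤ K := by
    rw [cot_eq_cos_div_sin, abs_div, abs_of_pos hsin, mul_div_assoc', div_le_iff₀ hsin]
    calc |u| * |cos x| ≤ |u| := mul_le_of_le_one_right (abs_nonneg u) (abs_cos_le_one x)
      _ ≤ K * sin x := h
  calc |u ^ 2 * cot x| = |u| * (|u| * |cot x|) := by rw [abs_mul, abs_pow, sq, mul_assoc]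
    _ ≤ |u| * K := mul_le_mul_of_nonneg_left hcot (abs_nonneg u)
    _ = K * |u| := mul_comm _ _

theorem continuousWithinAt_of_norm_le_mul_norm {α E F : Type*} [TopologicalSpace α]
    [NormedAddCommGroup E] [NormedAddCommGroup F] {f : α → E} {g : α → F} {s : Set α} {x : α}
    {K : ℝ} (hg : ContinuousWithinAt g s x) (hgx : g x = 0) (hx : x ∈ s)
    (hfg : ∀ t ∈ s, ‖f t‖ ≤ K * ‖g t‖) : ContinuousWithinAt f s x := by
  have hfx : f x = 0 := norm_le_zero_iff.1 (by simpa [hgx] using hfg x hx)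
  have hK : Tendsto (fun t => K * ‖g t‖) (𝓝[s] x) (𝓝 0) := by
    simpa [hgx] using (hg.norm.const_mul K).tendsto
  rw [ContinuousWithinAt, hfx]
  exact squeeze_zero_norm' (eventually_nhdsWithin_of_forall hfg) hK

theorem abs_le_mul_min_of_hasDerivWithinAt {y y' : ℝ → ℝ} {a b C t : ℝ}
    (hy : ∀ s ∈ Icc a b, HasDerivWithinAt y (y' s) (Icc a b) s) (hC : ∀ s ∈ Icc a b, |y' s| ≤ C)
    (ha : y a = 0) (hb : y b = 0) (ht : t ∈ Icc a b) : |y t| ≤ C * min (t - a) (b - t) := by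
  have hab : a ≤ b := ht.1.trans ht.2
  have bound := fun {u} (hu : u ∈ Icc a b) =>
    (convex_Icc a b).norm_image_sub_le_of_norm_hasDerivWithin_le hy hC hu ht
  have hleft := bound (left_mem_Icc.2 hab)
  have hright := bound (right_mem_Icc.2 hab)
  simp only [ha, hb, sub_zero, Real.norm_eq_abs] at hleft hright
  rw [abs_of_nonneg (sub_nonneg.2 ht.1)] at hleft
  rw [abs_sub_comm, abs_of_nonneg (sub_nonneg.2 ht.2)] at hright
  rw [mul_min_of_nonneg _ _ ((abs_nonneg _).trans (hC t ht))]
  exact le_min hleft hright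

noncomputable def piconeTerm (y : ℝ → ℝ) (a c t : ℝ) : ℝ := c * (y t ^ 2 * cot (c * (t - a)))

theorem hasDerivAt_piconeTerm {y : ℝ → ℝ} {a c t dy : ℝ} (hy : HasDerivAt y dy t)
    (hs : sin (c * (t - a)) ≠ 0) :
    HasDerivAt (piconeTerm y a c) (2 * c * y t * dy * cot (c * (t - a)) -
      c ^ 2 * y t ^ 2 * (1 + cot (c * (t - a)) ^ 2)) t := by
  have hφ : HasDerivAt (fun t => c * (t - a)) c t := by
    simpa using ((hasDerivAt_id t).sub_const a).const_mul c
  have hq := (Real.hasDerivAt_cot hs).comp t hφ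
  refine (((hy.pow 2).mul hq).const_mul c).congr_deriv ?_
  simp only [Function.comp_apply, Pi.pow_apply]
  push_cast
  ring

section

variable {y y' : ℝ → ℝ} {a b c C t : ℝ}

theorem sin_pos_of_mem_Ioo (hc₀ : 0 < c) (hc : c * (b - a) = π) (ht : t ∈ Ioo a b) :
    0 < sin (c * (t - a)) := by
  apply sin_pos_of_pos_of_lt_pi
  · exact mul_pos hc₀ (sub_pos.2 ht.1)
  · rw [← hc]
    exact mul_lt_mul_of_pos_left (by linarith [ht.2]) hc₀

theorem abs_le_mul_sin_of_hasDerivWithinAt (hc₀ : 0 < c) (hc : c * (b - a) = π)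
    (hy : ∀ s ∈ Icc a b, HasDerivWithinAt y (y' s) (Icc a b) s) (hC : ∀ s ∈ Icc a b, |y' s| ≤ C)
    (ha : y a = 0) (hb : y b = 0) (ht : t ∈ Icc a b) :
    |y t| ≤ π * C / (2 * c) * sin (c * (t - a)) := by
  have hC₀ : 0 ≤ C := (abs_nonneg _).trans (hC t ht)
  have hJordan := Real.two_div_pi_mul_min_le_sin (x := c * (t - a))
    (mul_nonneg hc₀.le (sub_nonneg.2 ht.1))
    (by rw [← hc]; exact mul_le_mul_of_nonneg_left (by linarith [ht.2]) hc₀.le)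
  rw [show π - c * (t - a) = c * (b - t) by linear_combination -hc,
    ← mul_min_of_nonneg _ _ hc₀.le] at hJordan
  calc |y t| ≤ C * min (t - a) (b - t) := abs_le_mul_min_of_hasDerivWithinAt hy hC ha hb ht
    _ = π * C / (2 * c) * (2 / π * (c * min (t - a) (b - t))) := by
      field_simp
    _ ≤ π * C / (2 * c) * sin (c * (t - a)) := by gcongr

theorem continuousOn_piconeTerm (hc₀ : 0 < c) (hc : c * (b - a) = π)
    (hy : ∀ s ∈ Icc a b, HasDerivWithinAt y (y' s) (Icc a b) s) (hy' : ContinuousOn y' (Icc a b))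
    (ha : y a = 0) (hb : y b = 0) : ContinuousOn (piconeTerm y a c) (Icc a b) := by
  obtain ⟨C, hC⟩ := isCompact_Icc.exists_bound_of_continuousOn hy'
  have hbound : ∀ s ∈ Icc a b, ‖piconeTerm y a c s‖ ≤ c * (π * C / (2 * c)) * ‖y s‖ := by
    intro s hs
    have hys := abs_le_mul_sin_of_hasDerivWithinAt hc₀ hc hy hC ha hb hs
    have hK : 0 ≤ π * C / (2 * c) := by
      have := (norm_nonneg _).trans (hC s hs)
      positivity
    rw [piconeTerm, norm_mul, Real.norm_of_nonneg hc₀.le, mul_assoc]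
    exact mul_le_mul_of_nonneg_left (abs_sq_mul_cot_le hK hys) hc₀.le
  intro t ht
  rcases eq_or_lt_of_le ht.1 with rfl | hat
  · exact continuousWithinAt_of_norm_le_mul_norm (hy _ ht).continuousWithinAt ha ht hbound
  rcases eq_or_lt_of_le ht.2 with rfl | htb
  · exact continuousWithinAt_of_norm_le_mul_norm (hy _ ht).continuousWithinAt hb ht hbound
  exact (hasDerivAt_piconeTerm ((hy t ht).hasDerivAt (Icc_mem_nhds hat htb))
    (sin_pos_of_mem_Ioo hc₀ hc ⟨hat, htb⟩).ne').continuousAt.continuousWithinAt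

theorem monotoneOn_integral_sub_piconeTerm (hc₀ : 0 < c) (hc : c * (b - a) = π)
    (hy : ∀ s ∈ Icc a b, HasDerivWithinAt y (y' s) (Icc a b) s) (hy' : ContinuousOn y' (Icc a b))
    (ha : y a = 0) (hb : y b = 0) :
    MonotoneOn (fun t => (∫ s in a..t, (y' s ^ 2 - c ^ 2 * y s ^ 2)) - piconeTerm y a c t)
      (Icc a b) := by
  have hab : a < b := sub_pos.1 (pos_of_mul_pos_right (hc ▸ pi_pos) hc₀.le)
  have hyc : ContinuousOn y (Icc a b) := fun t ht => (hy t ht).continuousWithinAt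
  have hf : ContinuousOn (fun s => y' s ^ 2 - c ^ 2 * y s ^ 2) (Icc a b) := by fun_prop
  have hprim : ContinuousOn (fun t => ∫ s in a..t, (y' s ^ 2 - c ^ 2 * y s ^ 2)) (Icc a b) := by
    rw [← uIcc_of_le hab.le]
    exact continuousOn_primitive_interval (hf.integrableOn_Icc.mono_set (uIcc_of_le hab.le).subset)
  refine monotoneOn_of_hasDerivWithinAt_nonneg (convex_Icc a b)
    (hprim.sub (continuousOn_piconeTerm hc₀ hc hy hy' ha hb))
    (f' := fun t => (y' t - c * y t * cot (c * (t - a))) ^ 2) ?_ fun _ _ => sq_nonneg _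
  rw [interior_Icc]
  intro t ht
  have hFTC := integral_hasDerivAt_right
    ((hf.mono (Icc_subset_Icc le_rfl ht.2.le)).intervalIntegrable_of_Icc ht.1.le)
    ((hf.mono Ioo_subset_Icc_self).stronglyMeasurableAtFilter isOpen_Ioo t ht)
    (hf.continuousAt (Icc_mem_nhds ht.1 ht.2))
  have hH := hasDerivAt_piconeTerm ((hy t (Ioo_subset_Icc_self ht)).hasDerivAt
    (Icc_mem_nhds ht.1 ht.2)) (sin_pos_of_mem_Ioo hc₀ hc ht).ne'
  exact ((hFTC.sub hH).congr_deriv (by ring)).hasDerivWithinAt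

theorem sq_mul_integral_sq_le_integral_sq_deriv (hc₀ : 0 < c) (hc : c * (b - a) = π)
    (hy : ∀ s ∈ Icc a b, HasDerivWithinAt y (y' s) (Icc a b) s) (hy' : ContinuousOn y' (Icc a b))
    (ha : y a = 0) (hb : y b = 0) :
    c ^ 2 * ∫ t in a..b, y t ^ 2 ≤ ∫ t in a..b, y' t ^ 2 := by
  have hab : a < b := sub_pos.1 (pos_of_mul_pos_right (hc ▸ pi_pos) hc₀.le)
  have hyc : ContinuousOn y (Icc a b) := fun t ht => (hy t ht).continuousWithinAt
  have h := monotoneOn_integral_sub_piconeTerm hc₀ hc hy hy' ha hb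
    (left_mem_Icc.2 hab.le) (right_mem_Icc.2 hab.le) hab.le
  have hy'2 : IntervalIntegrable (fun t => y' t ^ 2) MeasureTheory.volume a b :=
    (hy'.pow 2).intervalIntegrable_of_Icc hab.le
  have hy2 : IntervalIntegrable (fun t => y t ^ 2) MeasureTheory.volume a b :=
    (hyc.pow 2).intervalIntegrable_of_Icc hab.le
  simp only [integral_same, piconeTerm, ha, hb, zero_pow two_ne_zero, zero_mul, mul_zero,
    sub_zero] at h
  rw [integral_sub hy'2 (hy2.const_mul _), integral_const_mul] at h
  linarith

end

/-- Scaled Wirtinger inequality on a general interval `[a, b]`: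
if `y` is continuously differentiable on `[a, b]` and vanishes at the endpoints, then
`∫ₐᵇ y² ≤ ((b-a)/π)² ∫ₐᵇ y'²`. -/
theorem wirtinger_scaled (a b : ℝ) (hab : a < b) (y : ℝ → ℝ)
    (hy : ContDiffOn ℝ 1 y (Set.Icc a b))
    (ha : y a = 0) (hb : y b = 0) :
    ∫ t in a..b, (y t) ^ 2 ≤
      ((b - a) / π) ^ 2 * ∫ t in a..b, (derivWithin y (Set.Icc a b) t) ^ 2 := by
  have hba : 0 < b - a := sub_pos.2 hab
  have hderiv : ∀ t ∈ Icc a b, HasDerivWithinAt y (derivWithin y (Icc a b) t) (Icc a b) t :=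
    fun t ht => (hy.differentiableOn one_ne_zero t ht).hasDerivWithinAt
  have hwirtinger := sq_mul_integral_sq_le_integral_sq_deriv (div_pos pi_pos hba)
    (div_mul_cancel₀ π hba.ne') hderiv
    (hy.continuousOn_derivWithin (uniqueDiffOn_Icc hab) le_rfl) ha hb
  calc ∫ t in a..b, y t ^ 2
        = ((b - a) / π) ^ 2 * ((π / (b - a)) ^ 2 * ∫ t in a..b, y t ^ 2) := by field_simp
    _ ≤ ((b - a) / π) ^ 2 * ∫ t in a..b, derivWithin y (Icc a b) t ^ 2 := by gcongr
end

section
/- Let χ be an even primitive Dirichlet character modulo q > 1, let ξ(s,χ) = (q/π)^{s/2} Γ(s/2) L(s,χ), K(χ) = q^{1/2}/G(1,χ) and U(s,χ) = K(χ)^{1/2} ξ(s,χ). Then for all real t, U(1/2 + it, χ) is real. -/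
/-!
On the critical line `conj s = 1 - s`. Conjugation sends `ξ(s, χ)` to `ξ(conj s, χ⁻¹)` (identity
theorem, starting from the Dirichlet series), and the functional equation reads
`ξ(s, χ) = ε(χ) ξ(1 - s, χ⁻¹)` with `ε(χ) = G(χ) / √q`. From `k² = 1 / ε(χ)` and `k k' = 1` we get
`k' = k ε(χ)`; since `conj G(χ) = G(χ⁻¹)` for even `χ`, `conj k` is `± k'`, and `k * conj k ≥ 0`
rules out `-k'`. Hence `conj (k ξ(s, χ)) = k' ξ(1 - s, χ⁻¹) = k ε(χ) ξ(1 - s, χ⁻¹) = k ξ(s, χ)`.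
-/

open Complex ComplexConjugate

lemma Complex.conj_eq_of_conj_sq_eq_sq_of_mul_eq_one {z w : ℂ} (hsq : conj z ^ 2 = w ^ 2)
    (hzw : z * w = 1) : conj z = w := by
  refine (sq_eq_sq_iff_eq_or_eq_neg.mp hsq).resolve_right fun h => ?_
  have : (normSq z : ℂ) = -1 := by rw [← mul_conj, h, mul_neg, hzw]
  linarith [normSq_nonneg z, (by exact_mod_cast this : normSq z = -1)]

lemma Complex.conj_cpow_ofReal {x : ℝ} (hx : 0 ≤ x) (s : ℂ) :
    conj ((x : ℂ) ^ s) = (x : ℂ) ^ conj s := by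
  rw [cpow_conj _ _ (by rw [arg_ofReal_of_nonneg hx]; exact Real.pi_ne_zero.symm), conj_ofReal]

lemma conj_LSeries_conj (f : ℕ → ℂ) (s : ℂ) :
    conj (LSeries f (conj s)) = LSeries (fun n => conj (f n)) s := by
  rw [LSeries, LSeries, conj_tsum]
  refine tsum_congr fun n => ?_
  rcases eq_or_ne n 0 with rfl | hn
  · simp
  rw [LSeries.term_of_ne_zero hn, LSeries.term_of_ne_zero hn, map_div₀, ← ofReal_natCast,
    conj_cpow_ofReal n.cast_nonneg, conj_conj]

lemma MulChar.star_gaussSum_of_apply_neg_one {R : Type*} [CommRing R] [Fintype R]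
    {χ : MulChar R ℂ} (hχ : χ (-1) = 1) (ψ : AddChar R ℂ) :
    star (gaussSum χ ψ) = gaussSum χ⁻¹ ψ := by
  have hχ' : χ⁻¹ (-1) = 1 := by rw [← MulChar.star_apply', hχ, star_one]
  rw [star_gaussSum_eq, ψ.inv_mulShift, ← gaussSum_mulShift χ⁻¹ ψ (-1), Units.val_neg,
    Units.val_one, hχ', one_mul]

namespace DirichletCharacter

variable {N : ℕ}

lemma Even.inv {S : Type*} [CommRing S] {χ : DirichletCharacter S N} (hχ : χ.Even) :
    χ⁻¹.Even := by
  rw [DirichletCharacter.Even, MulChar.inv_apply_eq_inv, hχ, Ring.inverse_one]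

variable [NeZero N]

lemma IsPrimitive.ne_one {R : Type*} [CommMonoidWithZero R] {χ : DirichletCharacter R N}
    (hχ : χ.IsPrimitive) (hN : N ≠ 1) : χ ≠ 1 := by
  rintro rfl
  exact hN (hχ.symm.trans conductor_one)

lemma sum_range_mul_exp_eq_gaussSum (χ : DirichletCharacter ℂ N) :
    ∑ l ∈ Finset.range N, χ l * exp (2 * Real.pi * I * l / N) = gaussSum χ ZMod.stdAddChar := by
  refine Finset.sum_nbij' (fun l => (l : ZMod N)) (fun a => a.val) (by simp)
    (fun a _ => Finset.mem_range.mpr a.val_lt)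
    (fun l hl => ZMod.val_cast_of_lt (Finset.mem_range.mp hl))
    (fun a _ => ZMod.natCast_zmod_val a) fun l _ => ?_
  simpa using congrArg (χ l * ·) (ZMod.stdAddChar_coe (N := N) l).symm

lemma Even.rootNumber_eq {χ : DirichletCharacter ℂ N} (hχ : χ.Even) :
    rootNumber χ = gaussSum χ ZMod.stdAddChar / Real.sqrt N := by
  rw [rootNumber, if_pos hχ, pow_zero, div_one, ← ofReal_natCast, ← ofReal_ofNat 2,
    ← ofReal_one, ← ofReal_div, ← ofReal_cpow N.cast_nonneg, ← Real.sqrt_eq_rpow]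

lemma conj_LFunction {χ : DirichletCharacter ℂ N} (hχ : χ ≠ 1) (s : ℂ) :
    conj (χ.LFunction s) = χ⁻¹.LFunction (conj s) := by
  have hdiff : Differentiable ℂ (conj ∘ χ.LFunction ∘ conj) := fun w => by
    simpa using (differentiable_LFunction hχ (conj w)).conj_conj
  have hanalytic := hdiff.differentiableOn.analyticOnNhd isOpen_univ
  have hanalytic' : AnalyticOnNhd ℂ χ⁻¹.LFunction Set.univ :=
    (differentiable_LFunction (inv_ne_one.mpr hχ)).differentiableOn.analyticOnNhd isOpen_univ
  have heq : conj ∘ χ.LFunction ∘ conj = χ⁻¹.LFunction := by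
    refine hanalytic.eq_of_eventuallyEq hanalytic' (z₀ := 2) ?_
    filter_upwards [(isOpen_lt continuous_const continuous_re).mem_nhds
      (by norm_num : (1 : ℝ) < (2 : ℂ).re)] with w hw
    rw [Function.comp_apply, Function.comp_apply, LFunction_eq_LSeries _ hw,
      LFunction_eq_LSeries _ (by simpa using hw), conj_LSeries_conj]
    simp_rw [← MulChar.star_apply', RCLike.star_def]
  simpa using congrFun heq (conj s)

noncomputable def xi (χ : DirichletCharacter ℂ N) (s : ℂ) : ℂ :=
  ((N : ℂ) / Real.pi) ^ (s / 2) * Gamma (s / 2) * χ.LFunction s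

lemma conj_xi {χ : DirichletCharacter ℂ N} (hχ : χ ≠ 1) (s : ℂ) :
    conj (xi χ s) = xi χ⁻¹ (conj s) := by
  have hbase : (N : ℂ) / Real.pi = ((N / Real.pi : ℝ) : ℂ) := by push_cast; rfl
  rw [xi, xi, map_mul, map_mul, hbase, conj_cpow_ofReal (by positivity), ← Gamma_conj,
    conj_LFunction hχ, map_div₀, map_ofNat]

lemma Even.xi_eq_cpow_mul_completedLFunction {χ : DirichletCharacter ℂ N} (hχ : χ.Even)
    {s : ℂ} (hs : 0 < s.re) : xi χ s = (N : ℂ) ^ (s / 2) * completedLFunction χ s := by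
  have hpow : ((N : ℂ) / Real.pi) ^ (s / 2) = (N : ℂ) ^ (s / 2) * (Real.pi : ℂ) ^ (-s / 2) := by
    rw [← ofReal_natCast, div_cpow_ofReal_nonneg N.cast_nonneg Real.pi_pos.le, neg_div,
      cpow_neg, div_eq_mul_inv]
  rw [xi, LFunction_eq_completed_div_gammaFactor χ s (.inl (ne_of_apply_ne re hs.ne')),
    hχ.gammaFactor_def, hpow, mul_assoc, mul_assoc, ← mul_assoc _ (Gamma _), ← Gammaℝ_def,
    mul_div_cancel₀ _ (Gammaℝ_ne_zero_of_re_pos hs)]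

lemma IsPrimitive.xi_one_sub {χ : DirichletCharacter ℂ N} (hprim : χ.IsPrimitive)
    (heven : χ.Even) {s : ℂ} (hs₀ : 0 < s.re) (hs₁ : s.re < 1) :
    xi χ (1 - s) = rootNumber χ * xi χ⁻¹ s := by
  have hpow : (N : ℂ) ^ ((1 - s) / 2) * (N : ℂ) ^ (s - 1 / 2) = (N : ℂ) ^ (s / 2) := by
    rw [← cpow_add _ _ (NeZero.ne _)]
    ring_nf
  rw [heven.xi_eq_cpow_mul_completedLFunction (by simpa using hs₁),
    heven.inv.xi_eq_cpow_mul_completedLFunction hs₀, hprim.completedLFunction_one_sub, ← hpow]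
  ring

end DirichletCharacter

open DirichletCharacter in
/-- For an even primitive Dirichlet character `χ` mod `q > 1`, with
`ξ(s,χ) = (q/π)^{s/2} Γ(s/2) L(s,χ)`, `K(χ) = q^{1/2}/G(1,χ)` and
`U(s,χ) = K(χ)^{1/2} ξ(s,χ)` (square roots of `K(χ)`, `K(χ̄)` chosen consistently),
the value `U(1/2 + it, χ)` is real for every real `t`. -/
theorem U_half_line_real (q : ℕ) [NeZero q] (hq : 1 < q)
    (χ χ' : DirichletCharacter ℂ q)
    (hconj : ∀ a : ZMod q, χ' a = (starRingEnd ℂ) (χ a))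
    (hprim : χ.IsPrimitive) (heven : χ.Even)
    (k k' : ℂ)
    (hk : k ^ 2 = Real.sqrt q /
      (∑ l ∈ Finset.range q, χ l * Complex.exp (2 * Real.pi * I * l / q)))
    (hk' : k' ^ 2 = Real.sqrt q /
      (∑ l ∈ Finset.range q, χ' l * Complex.exp (2 * Real.pi * I * l / q)))
    (hkk' : k * k' = 1) :
    ∀ t : ℝ,
      (k * (((q : ℂ) / Real.pi) ^ ((1 / 2 + t * I) / 2) *
        Complex.Gamma ((1 / 2 + t * I) / 2) * χ.LFunction (1 / 2 + t * I))).im = 0 := by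
  obtain rfl : χ' = χ⁻¹ := MulChar.ext fun a => (hconj a).trans (MulChar.star_apply' χ a)
  rw [sum_range_mul_exp_eq_gaussSum] at hk hk'
  have hk'_eq : k' = k * rootNumber χ := by
    have hk0 : k ≠ 0 := left_ne_zero_of_mul_eq_one hkk'
    have hG : gaussSum χ ZMod.stdAddChar ≠ 0 := fun h => hk0 (by simpa [h] using hk)
    refine mul_left_cancel₀ hk0 ?_
    rw [hkk', ← mul_assoc, ← sq, hk, heven.rootNumber_eq, div_mul_div_cancel₀ hG,
      div_self (ofReal_ne_zero.mpr (Real.sqrt_ne_zero'.mpr (Nat.cast_pos.mpr (NeZero.pos q))))]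
  have hconj_k : conj k = k' := by
    refine conj_eq_of_conj_sq_eq_sq_of_mul_eq_one ?_ hkk'
    rw [← map_pow, hk, map_div₀, conj_ofReal, ← star_def,
      MulChar.star_gaussSum_of_apply_neg_one heven, hk']
  intro t
  set s : ℂ := 1 / 2 + t * I
  have hs : conj s = 1 - s := by
    apply Complex.ext <;> norm_num [s]
  have hFE : xi χ s = rootNumber χ * xi χ⁻¹ (1 - s) := by
    simpa using hprim.xi_one_sub heven (s := 1 - s) (by norm_num [s]) (by norm_num [s])
  change (k * xi χ s).im = 0
  rw [← conj_eq_iff_im, map_mul, hconj_k, conj_xi (hprim.ne_one hq.ne'), hs, hFE,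
    hk'_eq]
  ring
end
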